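/- Let (Y,T) be a minimal continuous flow, and regard Λ(Y,T) as an additive subgroup of ℝ. The map from ℚ ⊗_ℤ Λ(Y,T) to ℝ determined by r ⊗ λ ↦ rλ is an injective ℚ-linear map whose range is equal to the set {0} ∪ {t ∈ ℝ \ {0} : the time-(1/t) map T^{1/t} is not minimal}. In particular, this set is a countable ℚ-linear subspace of ℝ. -/

import Mathlib

open Set

/-- A continuous flow: a jointly continuous action of `ℝ` on `Y` with `T 0 = id` and
`T (s + t) = T s ∘ T t`. -/
def IsFlow {Y : Type*} [TopologicalSpace Y] (T : ℝ → Y → Y) : Prop :=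
  Continuous (fun p : Y × ℝ => T p.2 p.1) ∧ (∀ y, T 0 y = y) ∧
    ∀ s t : ℝ, ∀ y, T (s + t) y = T s (T t y)

/-- A set is invariant under the flow if `T t '' M = M` for all `t`. -/
def FlowInvariant {Y : Type*} (T : ℝ → Y → Y) (M : Set Y) : Prop :=
  ∀ t : ℝ, T t '' M = M

/-- The flow is minimal if the only closed invariant subsets are `∅` and `univ`. -/
def IsMinimalFlow {Y : Type*} [TopologicalSpace Y] (T : ℝ → Y → Y) : Prop :=
  ∀ M : Set Y, IsClosed M → FlowInvariant T M → M = ∅ ∨ M = univ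

/-- A self-map is minimal if the only closed subsets `M` with `g '' M = M` are `∅` and `univ`. -/
def IsMinimalMap {Y : Type*} [TopologicalSpace Y] (g : Y → Y) : Prop :=
  ∀ M : Set Y, IsClosed M → g '' M = M → M = ∅ ∨ M = univ

/-- `χ : Y → ℂ` is a (unit-circle valued) eigenvector of the flow `T` with eigenvalue `l ∈ ℝ`
if it is continuous, of modulus one, and `χ (T t y) = e^{2πi l t} * χ y`. -/
def IsEigenvector {Y : Type*} [TopologicalSpace Y] (T : ℝ → Y → Y) (l : ℝ) (χ : Y → ℂ) : Prop :=
  Continuous χ ∧ (∀ y, ‖χ y‖ = 1) ∧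
    ∀ (y : Y) (t : ℝ), χ (T t y) = Complex.exp (2 * Real.pi * Complex.I * l * t) * χ y

/-- The set `Λ(Y, T)` of eigenvalues of a flow. -/
def Eigenvalues {Y : Type*} [TopologicalSpace Y] (T : ℝ → Y → Y) : Set ℝ :=
  {l : ℝ | ∃ χ : Y → ℂ, IsEigenvector T l χ}

/-!
Every element of `ℚ ⊗[ℤ] G` has the form `k⁻¹ ⊗ g` with `k ∈ ℤ \ {0}`, because `ℚ` is a
localization of `ℤ`; this gives injectivity and identifies the range with
`{t | ∃ k ≠ 0, k • t ∈ Λ(Y, T)}`. The dynamical content is that, for `s ≠ 0`, the time-`s` map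
fails to be minimal iff `l * s ∈ ℤ` for some eigenvalue `l ≠ 0`.

If `l * s ∈ ℤ`, an eigenvector is `T s`-invariant, and its level sets are closed, invariant and
proper (`T (1 / 2l)` sends the value `z` to `-z`). Conversely, let `M` be a minimal set of `T s`.
Flow translates of `M` are equal or disjoint, so the stabilizer `{u | T u '' M = M}` is a closed
proper subgroup of `ℝ` containing `s`, i.e. `cℤ` with `c > 0`. Minimality of the flow makes every
point of the form `T t m` with `m ∈ M`, and `T t m ↦ t mod c` is a well-defined continuous phase
`Y → ℝ/cℤ`; composing with `ℝ/cℤ ≃ S¹` yields an eigenvector with eigenvalue `1/c`, and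
`(1/c) * s ∈ ℤ`.

Countability: eigenvectors with distinct eigenvalues are at sup-distance `2` in the separable
space `C(Y, ℂ)`.
-/

section RationalTensor

variable {M : Type*} [AddCommGroup M]

open scoped TensorProduct in
theorem TensorProduct.exists_eq_inv_intCast_tmul (x : ℚ ⊗[ℤ] M) :
    ∃ k : ℤ, k ≠ 0 ∧ ∃ m : M, x = ((k : ℚ)⁻¹) ⊗ₜ m := by
  obtain ⟨⟨m, k⟩, hk⟩ := IsLocalizedModule.surj (nonZeroDivisors ℤ) (TensorProduct.mk ℤ ℚ M 1) x
  have hk0 : (k : ℤ) ≠ 0 := nonZeroDivisors.coe_ne_zero k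
  refine ⟨k, hk0, m, ?_⟩
  have hk' : ((k : ℤ) : ℚ) • x = 1 ⊗ₜ m := by
    rw [Int.cast_smul_eq_zsmul]; exact hk
  calc x = ((k : ℤ) : ℚ)⁻¹ • ((k : ℤ) : ℚ) • x := by
        rw [smul_smul, inv_mul_cancel₀ (by exact_mod_cast hk0), one_smul]
    _ = _ := by rw [hk', TensorProduct.smul_tmul', smul_eq_mul, mul_one]

variable {V : Type*} [AddCommGroup V] [Module ℚ V] (G : AddSubgroup V)

theorem AddSubgroup.injective_liftBaseChange_subtype :
    Function.Injective (G.subtype.toIntLinearMap.liftBaseChange ℚ) := by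
  refine (injective_iff_map_eq_zero _).2 fun x hx => ?_
  obtain ⟨k, hk, g, rfl⟩ := TensorProduct.exists_eq_inv_intCast_tmul x
  rw [LinearMap.liftBaseChange_tmul, smul_eq_zero, inv_eq_zero, Int.cast_eq_zero] at hx
  rcases hx with hx | hx
  · exact absurd hx hk
  · rw [show g = 0 from Subtype.ext hx, TensorProduct.tmul_zero]

theorem AddSubgroup.mem_range_liftBaseChange_subtype {v : V} :
    v ∈ range (G.subtype.toIntLinearMap.liftBaseChange ℚ) ↔ ∃ k : ℤ, k ≠ 0 ∧ k • v ∈ G := by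
  constructor
  · rintro ⟨x, rfl⟩
    obtain ⟨k, hk, g, rfl⟩ := TensorProduct.exists_eq_inv_intCast_tmul x
    refine ⟨k, hk, ?_⟩
    rw [LinearMap.liftBaseChange_tmul, ← Int.cast_smul_eq_zsmul ℚ, smul_smul,
      mul_inv_cancel₀ (by exact_mod_cast hk), one_smul]
    exact g.2
  · rintro ⟨k, hk, hkv⟩
    refine ⟨((k : ℚ)⁻¹) ⊗ₜ ⟨k • v, hkv⟩, ?_⟩
    rw [LinearMap.liftBaseChange_tmul]
    simp [← Int.cast_smul_eq_zsmul ℚ, smul_smul, hk]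

theorem AddSubgroup.countable_range_liftBaseChange_subtype (hG : (G : Set V).Countable) :
    (range (G.subtype.toIntLinearMap.liftBaseChange ℚ)).Countable := by
  have := hG.to_subtype
  refine (countable_range fun p : ℤ × G => ((p.1 : ℚ)⁻¹) • (p.2 : V)).mono ?_
  rintro _ ⟨x, rfl⟩
  obtain ⟨k, -, g, rfl⟩ := TensorProduct.exists_eq_inv_intCast_tmul x
  exact ⟨(k, g), rfl⟩

end RationalTensor

namespace IsFlow

variable {Y : Type*} [TopologicalSpace Y] {T : ℝ → Y → Y}

theorem continuous_apply (hT : IsFlow T) (t : ℝ) : Continuous (T t) :=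
  hT.1.comp (continuous_id.prodMk continuous_const)

theorem continuous_orbit (hT : IsFlow T) (y : Y) : Continuous fun t => T t y :=
  hT.1.comp (continuous_const.prodMk continuous_id)

theorem apply_neg_apply (hT : IsFlow T) (t : ℝ) (y : Y) : T (-t) (T t y) = y := by
  rw [← hT.2.2, neg_add_cancel, hT.2.1]

theorem apply_apply_neg (hT : IsFlow T) (t : ℝ) (y : Y) : T t (T (-t) y) = y := by
  simpa using hT.apply_neg_apply (-t) y

theorem apply_comm (hT : IsFlow T) (s t : ℝ) (y : Y) : T s (T t y) = T t (T s y) := by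
  rw [← hT.2.2, ← hT.2.2, add_comm]

theorem image_image (hT : IsFlow T) (s t : ℝ) (M : Set Y) : T s '' (T t '' M) = T (s + t) '' M := by
  rw [Set.image_image]
  exact image_congr fun y _ => (hT.2.2 s t y).symm

theorem image_eq_of_mapsTo (hT : IsFlow T) {t : ℝ} {M : Set Y} (h : MapsTo (T t) M M)
    (h' : MapsTo (T (-t)) M M) : T t '' M = M :=
  h.image_subset.antisymm fun y hy => ⟨T (-t) y, h' hy, hT.apply_apply_neg t y⟩

theorem flowInvariant_of_mapsTo (hT : IsFlow T) {M : Set Y} (h : ∀ t, MapsTo (T t) M M) :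
    FlowInvariant T M :=
  fun t => hT.image_eq_of_mapsTo (h t) (h (-t))

def stabilizer (hT : IsFlow T) (M : Set Y) : AddSubgroup ℝ where
  carrier := {u | T u '' M = M}
  zero_mem' := by simp [hT.2.1]
  add_mem' {a b} ha hb := by
    simp only [mem_ofPred_eq] at *
    rw [← hT.image_image, hb, ha]
  neg_mem' {a} ha := by
    simp only [mem_ofPred_eq] at *
    conv_lhs => rw [← ha, hT.image_image, neg_add_cancel]
    simp [hT.2.1]

theorem mem_stabilizer (hT : IsFlow T) {M : Set Y} {u : ℝ} :
    u ∈ hT.stabilizer M ↔ T u '' M = M := Iff.rfl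

theorem isClosed_setOf_mapsTo (hT : IsFlow T) {M : Set Y} (hM : IsClosed M) :
    IsClosed {u | MapsTo (T u) M M} := by
  simp only [MapsTo, ofPred_forall]
  exact isClosed_iInter fun x => isClosed_iInter fun _ => hM.preimage (hT.continuous_orbit x)

theorem isClosed_stabilizer (hT : IsFlow T) {M : Set Y} (hM : IsClosed M) :
    IsClosed (hT.stabilizer M : Set ℝ) := by
  have : (hT.stabilizer M : Set ℝ) =
      {u | MapsTo (T u) M M} ∩ Neg.neg ⁻¹' {u | MapsTo (T u) M M} := by
    ext u
    refine ⟨fun hu => ⟨?_, ?_⟩, fun hu => hT.image_eq_of_mapsTo hu.1 hu.2⟩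
    · exact (mapsTo_image (T u) M).mono_right (hT.mem_stabilizer.1 hu).subset
    · exact (mapsTo_image (T (-u)) M).mono_right (hT.mem_stabilizer.1 (neg_mem hu)).subset
  rw [this]
  have hclosed := hT.isClosed_setOf_mapsTo hM
  exact hclosed.inter (hclosed.preimage continuous_neg)

theorem flowInvariant_iff_stabilizer_eq_top (hT : IsFlow T) {M : Set Y} :
    FlowInvariant T M ↔ hT.stabilizer M = ⊤ := by
  rw [AddSubgroup.eq_top_iff']
  rfl

end IsFlow

section Eigenvectors

variable {Y : Type*} [TopologicalSpace Y] {T : ℝ → Y → Y} {l : ℝ} {χ : Y → ℂ}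

theorem IsEigenvector.apply_eq_of_mul_eq_int (hχ : IsEigenvector T l χ) {s : ℝ} {k : ℤ}
    (hk : l * s = k) (y : Y) : χ (T s y) = χ y := by
  rw [hχ.2.2, show 2 * Real.pi * Complex.I * l * s = k * (2 * Real.pi * Complex.I) by
    rw [mul_assoc _ (l : ℂ), ← Complex.ofReal_mul, hk]; push_cast; ring,
    Complex.exp_int_mul_two_pi_mul_I, one_mul]

theorem IsEigenvector.apply_half_period (hχ : IsEigenvector T l χ) (hl : l ≠ 0) (y : Y) :
    χ (T (1 / (2 * l)) y) = -χ y := by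
  have hl' : (l : ℂ) ≠ 0 := Complex.ofReal_ne_zero.2 hl
  rw [hχ.2.2, show 2 * Real.pi * Complex.I * l * (1 / (2 * l) : ℝ) = Real.pi * Complex.I by
    push_cast; field_simp, Complex.exp_pi_mul_I, neg_one_mul]

theorem IsEigenvector.not_isMinimalMap [Nonempty Y] (hT : IsFlow T) (hχ : IsEigenvector T l χ)
    (hl : l ≠ 0) {s : ℝ} {k : ℤ} (hk : l * s = k) : ¬ IsMinimalMap (T s) := by
  intro hmin
  obtain ⟨y₀⟩ := ‹Nonempty Y›
  have hk' : l * (-s) = (-k : ℤ) := by push_cast; linarith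
  have hmaps : ∀ {r : ℝ} {n : ℤ}, l * r = n → MapsTo (T r) (χ ⁻¹' {χ y₀}) (χ ⁻¹' {χ y₀}) :=
    fun hn y hy => (hχ.apply_eq_of_mul_eq_int hn y).trans hy
  rcases hmin _ (isClosed_singleton.preimage hχ.1) (hT.image_eq_of_mapsTo (hmaps hk) (hmaps hk'))
    with h | h
  · exact (eq_empty_iff_forall_notMem.1 h) y₀ rfl
  · have hy : χ (T (1 / (2 * l)) y₀) = χ y₀ := (h ▸ mem_univ _ : _ ∈ χ ⁻¹' {χ y₀})
    rw [hχ.apply_half_period hl] at hy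
    have h0 : χ y₀ = 0 := by linear_combination (-1 / 2 : ℂ) * hy
    simpa [h0] using hχ.2.1 y₀

theorem isEigenvector_toCircle_comp {c : ℝ} {θ : Y → AddCircle c} (hθ : Continuous θ)
    (hθT : ∀ y t, θ (T t y) = t + θ y) :
    IsEigenvector T c⁻¹ fun y => (AddCircle.toCircle (θ y) : ℂ) := by
  refine ⟨continuous_subtype_val.comp (AddCircle.continuous_toCircle.comp hθ),
    fun y => Circle.norm_coe _, fun y t => ?_⟩
  dsimp only
  rw [hθT, AddCircle.toCircle_add, AddCircle.toCircle_apply_mk, Circle.coe_mul, Circle.coe_exp]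
  congr 2
  push_cast
  ring

end Eigenvectors

section Countable

theorem Complex.exists_norm_exp_mul_sub_eq_two {a b : ℂ} (ha : ‖a‖ = 1) (hb : ‖b‖ = 1) {ν : ℝ}
    (hν : ν ≠ 0) : ∃ t : ℝ, ‖Complex.exp (2 * Real.pi * Complex.I * ν * t) * a - b‖ = 2 := by
  set z := -b * (starRingEnd ℂ) a
  have hz : ‖z‖ = 1 := by simp [z, ha, hb]
  refine ⟨z.arg / (2 * Real.pi * ν), ?_⟩
  have hexp : Complex.exp (2 * Real.pi * Complex.I * ν * (z.arg / (2 * Real.pi * ν) : ℝ)) = z := by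
    conv_rhs => rw [← Complex.norm_mul_exp_arg_mul_I z, hz]
    have : (ν : ℂ) ≠ 0 := Complex.ofReal_ne_zero.2 hν
    push_cast
    field_simp
  have haa : (starRingEnd ℂ) a * a = 1 := by
    rw [mul_comm, Complex.mul_conj, Complex.normSq_eq_norm_sq, ha]; norm_num
  rw [hexp, show z * a - b = -2 * b by linear_combination (-b) * haa]
  simp [hb]

variable {Y : Type*} [MetricSpace Y] [CompactSpace Y] [Nonempty Y] {T : ℝ → Y → Y}

theorem IsEigenvector.two_le_dist {l m : ℝ} {χ ψ : Y → ℂ} (hχ : IsEigenvector T l χ)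
    (hψ : IsEigenvector T m ψ) (hlm : l ≠ m) :
    2 ≤ dist (⟨χ, hχ.1⟩ : C(Y, ℂ)) ⟨ψ, hψ.1⟩ := by
  obtain ⟨y⟩ := ‹Nonempty Y›
  obtain ⟨t, ht⟩ := Complex.exists_norm_exp_mul_sub_eq_two (hχ.2.1 y) (hψ.2.1 y)
    (sub_ne_zero.2 hlm)
  have hunit : ‖Complex.exp (2 * Real.pi * Complex.I * m * t)‖ = 1 := by
    rw [show 2 * Real.pi * Complex.I * m * t = (2 * Real.pi * m * t : ℝ) * Complex.I by
      push_cast; ring, Complex.norm_exp_ofReal_mul_I]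
  calc (2 : ℝ) = dist (χ (T t y)) (ψ (T t y)) := by
        rw [Complex.dist_eq, hχ.2.2, hψ.2.2, ← ht, ← one_mul ‖_ - ψ y‖, ← hunit, ← norm_mul,
          mul_sub, ← mul_assoc, ← Complex.exp_add]
        congr 4
        push_cast
        ring
    _ ≤ _ := ContinuousMap.dist_apply_le_dist (f := ⟨χ, hχ.1⟩) (g := ⟨ψ, hψ.1⟩) (T t y)

theorem eigenvalues_countable (T : ℝ → Y → Y) : (Eigenvalues T).Countable := by
  choose χ hχ using fun l : Eigenvalues T => l.2
  have hdisj : Pairwise fun l m => Disjoint (Metric.ball (⟨χ l, (hχ l).1⟩ : C(Y, ℂ)) 1)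
      (Metric.ball ⟨χ m, (hχ m).1⟩ 1) := fun l m hlm =>
    Metric.ball_disjoint_ball (by linarith [(hχ l).two_le_dist (hχ m) (Subtype.coe_ne_coe.2 hlm)])
  have := hdisj.countable_of_isOpen_disjoint (fun _ => Metric.isOpen_ball)
    (fun _ => Metric.nonempty_ball.2 one_pos)
  exact countable_coe_iff.1 this

end Countable

theorem AddSubgroup.exists_pos_eq_zmultiples_of_isClosed {A : AddSubgroup ℝ}
    (hA : IsClosed (A : Set ℝ)) (htop : A ≠ ⊤) (hbot : A ≠ ⊥) :
    ∃ c : ℝ, 0 < c ∧ A = AddSubgroup.zmultiples c := by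
  rcases A.dense_or_cyclic with hd | ⟨a, rfl⟩
  · exact absurd (AddSubgroup.coe_eq_univ.1 (hA.closure_eq ▸ hd.closure_eq)) htop
  · rw [← AddSubgroup.zmultiples_eq_closure] at hbot ⊢
    have ha : a ≠ 0 := by rintro rfl; exact hbot AddSubgroup.zmultiples_zero_eq_bot
    refine ⟨|a|, abs_pos.2 ha, ?_⟩
    rcases abs_choice a with h | h <;> rw [h]
    exact AddSubgroup.zmultiples_neg.symm

section MinimalSet

variable {Y : Type*} [TopologicalSpace Y]

abbrev IsMinimalSet (g : Y → Y) (M : Set Y) : Prop :=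
  Minimal (fun N : Set Y => N.Nonempty ∧ IsClosed N ∧ MapsTo g N N) M

theorem exists_isMinimalSet_subset [CompactSpace Y] {g : Y → Y} {M₀ : Set Y} (hne : M₀.Nonempty)
    (hcl : IsClosed M₀) (hg : MapsTo g M₀ M₀) : ∃ M ⊆ M₀, IsMinimalSet g M := by
  refine zorn_superset_nonempty _ (fun c hcS hchain hcne => ?_) M₀ ⟨hne, hcl, hg⟩
  have hcl : ∀ N ∈ c, IsClosed N := fun N hN => (hcS hN).2.1
  refine ⟨⋂₀ c, ⟨?_, isClosed_sInter hcl, fun y hy N hN => (hcS hN).2.2 (hy N hN)⟩,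
    fun N hN => sInter_subset_of_mem hN⟩
  have := hcne.to_subtype
  have hdir : DirectedOn (· ⊇ ·) c := IsChain.directedOn hchain.symm
  exact IsCompact.nonempty_sInter_of_directed_nonempty_isCompact_isClosed hdir
    (fun N hN => (hcS hN).1) (fun N hN => (hcl N hN).isCompact) hcl

theorem exists_isMinimalSet_ne_univ [CompactSpace Y] {g : Y → Y} (h : ¬ IsMinimalMap g) :
    ∃ M, IsMinimalSet g M ∧ M ≠ univ := by
  simp only [IsMinimalMap, not_forall, not_or] at h
  obtain ⟨M₀, hcl, hinv, hne, hne_univ⟩ := h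
  obtain ⟨M, hM₀, hM⟩ :=
    exists_isMinimalSet_subset (nonempty_iff_ne_empty.2 hne) hcl (hinv ▸ mapsTo_image g M₀)
  exact ⟨M, hM, fun h => hne_univ (eq_univ_of_univ_subset (h ▸ hM₀))⟩

theorem IsMinimalSet.image_eq [CompactSpace Y] [T2Space Y] {g : Y → Y} {M : Set Y}
    (hM : IsMinimalSet g M) (hg : Continuous g) : g '' M = M :=
  hM.eq_of_le ⟨hM.1.1.image g, (hM.1.2.1.isCompact.image hg).isClosed,
    fun _ hy => mem_image_of_mem g (hM.1.2.2.image_subset hy)⟩ hM.1.2.2.image_subset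

end MinimalSet

section Forward

variable {Y : Type*} [TopologicalSpace Y] [CompactSpace Y] [T2Space Y] {T : ℝ → Y → Y}
  {M : Set Y} {s : ℝ}

theorem IsMinimalSet.subset_image_of_inter_nonempty (hT : IsFlow T) (hM : IsMinimalSet (T s) M)
    {u : ℝ} (hu : (T u '' M ∩ M).Nonempty) : M ⊆ T u '' M := by
  have hN : T u '' M ∩ M = M := hM.eq_of_le ⟨hu,
    (hM.1.2.1.isCompact.image (hT.continuous_apply u)).isClosed.inter hM.1.2.1,
    by rintro _ ⟨⟨m, hm, rfl⟩, hx⟩; exact ⟨⟨T s m, hM.1.2.2 hm, hT.apply_comm u s m⟩, hM.1.2.2 hx⟩⟩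
    inter_subset_right
  exact hN.symm.subset.trans inter_subset_left

theorem IsMinimalSet.mem_stabilizer_of_inter_nonempty (hT : IsFlow T) (hM : IsMinimalSet (T s) M)
    {u : ℝ} (hu : (T u '' M ∩ M).Nonempty) : u ∈ hT.stabilizer M := by
  obtain ⟨_, ⟨m, hm, rfl⟩, hum⟩ := hu
  have hneg : M ⊆ T (-u) '' M :=
    hM.subset_image_of_inter_nonempty hT ⟨m, ⟨T u m, hum, hT.apply_neg_apply u m⟩, hm⟩
  refine (Subset.antisymm ?_ (hM.subset_image_of_inter_nonempty hT ⟨_, ⟨m, hm, rfl⟩, hum⟩))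
  calc T u '' M ⊆ T u '' (T (-u) '' M) := image_mono hneg
    _ = M := by simp [hT.image_image, hT.2.1]

theorem IsMinimalSet.coe_eq_of_apply_eq (hT : IsFlow T) (hM : IsMinimalSet (T s) M) {c : ℝ}
    (hstab : hT.stabilizer M = AddSubgroup.zmultiples c) {m m' : Y} (hm : m ∈ M) (hm' : m' ∈ M)
    {t t' : ℝ} (h : T t m = T t' m') : (t : AddCircle c) = t' := by
  rw [QuotientAddGroup.eq_iff_sub_mem, ← hstab]
  refine hM.mem_stabilizer_of_inter_nonempty hT ⟨m', ⟨m, hm, ?_⟩, hm'⟩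
  rw [sub_eq_neg_add, hT.2.2, h, hT.apply_neg_apply]

theorem IsFlow.exists_mem_Icc_apply_eq (hT : IsFlow T) (hmin : IsMinimalFlow T) (hM : IsClosed M)
    (hne : M.Nonempty) {c : ℝ} (hc : 0 < c) (hcM : c ∈ hT.stabilizer M) (y : Y) :
    ∃ m ∈ M, ∃ t ∈ Icc 0 c, T t m = y := by
  set V := (fun p : Y × ℝ => T p.2 p.1) '' (M ×ˢ Icc 0 c)
  have hV : FlowInvariant T V := by
    refine hT.flowInvariant_of_mapsTo fun u => ?_
    rintro _ ⟨⟨m, t⟩, ⟨hm, -⟩, rfl⟩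
    have hk : T (toIcoDiv hc 0 (u + t) • c) '' M = M := zsmul_mem hcM _
    refine ⟨(T (toIcoDiv hc 0 (u + t) • c) m, toIcoMod hc 0 (u + t)),
      ⟨hk ▸ mem_image_of_mem _ hm, Ico_subset_Icc_self (toIcoMod_mem_Ico' hc _)⟩, ?_⟩
    dsimp only
    rw [← hT.2.2, ← hT.2.2, ← self_sub_toIcoMod hc 0 (u + t), add_sub_cancel]
  rcases hmin V ((hM.isCompact.prod isCompact_Icc).image hT.1).isClosed hV with h | h
  · exact absurd h ((hne.prod (nonempty_Icc.2 hc.le)).image _).ne_empty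
  · obtain ⟨⟨m, t⟩, ⟨hm, ht⟩, rfl⟩ := h.symm ▸ mem_univ y
    exact ⟨m, hm, t, ht, rfl⟩

theorem IsFlow.exists_continuous_phase (hT : IsFlow T) (hM : IsClosed M) {c : ℝ}
    (hcover : ∀ y, ∃ m ∈ M, ∃ t ∈ Icc 0 c, T t m = y)
    (hfiber : ∀ {m m'}, m ∈ M → m' ∈ M → ∀ {t t' : ℝ}, T t m = T t' m' →
      (t : AddCircle c) = t') :
    ∃ θ : Y → AddCircle c, Continuous θ ∧ ∀ y t, θ (T t y) = t + θ y := by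
  choose m hm τ hτ hmτ using hcover
  set θ : Y → AddCircle c := fun y => τ y
  have hθ : ∀ {m'}, m' ∈ M → ∀ t, θ (T t m') = t := fun hm' t => hfiber (hm _) hm' (hmτ _)
  refine ⟨θ, continuous_iff_isClosed.2 fun F hF => ?_, fun y t => ?_⟩
  · have hpre : θ ⁻¹' F = (fun p : Y × ℝ => T p.2 p.1) ''
        (M ×ˢ Icc 0 c ∩ (fun p : Y × ℝ => (p.2 : AddCircle c)) ⁻¹' F) := by
      ext y
      refine ⟨fun hy => ⟨(m y, τ y), ⟨⟨hm y, hτ y⟩, hy⟩, hmτ y⟩, ?_⟩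
      rintro ⟨⟨m', t⟩, ⟨⟨hm', -⟩, ht⟩, rfl⟩
      simpa [hθ hm' t] using ht
    rw [hpre]
    exact (((hM.isCompact.prod isCompact_Icc).inter_right (hF.preimage
      (continuous_quotient_mk'.comp continuous_snd))).image hT.1).isClosed
  · rw [← hmτ y, ← hT.2.2, hθ (hm y), hθ (hm y), AddCircle.coe_add]

theorem IsFlow.exists_eigenvalue_mul_eq_int_of_not_isMinimalMap (hT : IsFlow T)
    (hmin : IsMinimalFlow T) (hs : s ≠ 0) (h : ¬ IsMinimalMap (T s)) :
    ∃ l ∈ Eigenvalues T, l ≠ 0 ∧ ∃ k : ℤ, l * s = k := by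
  obtain ⟨M, hM, hM_ne_univ⟩ := exists_isMinimalSet_ne_univ h
  obtain ⟨hMne, hMcl, -⟩ := hM.1
  have hsM : s ∈ hT.stabilizer M := hM.image_eq (hT.continuous_apply s)
  obtain ⟨c, hc, hstab⟩ := AddSubgroup.exists_pos_eq_zmultiples_of_isClosed
    (hT.isClosed_stabilizer hMcl)
    (fun htop => hM_ne_univ ((hmin M hMcl (hT.flowInvariant_iff_stabilizer_eq_top.2 htop)
      ).resolve_left hMne.ne_empty))
    (fun hbot => hs (by rwa [hbot, AddSubgroup.mem_bot] at hsM))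
  obtain ⟨θ, hθ, hθT⟩ := hT.exists_continuous_phase hMcl
    (hT.exists_mem_Icc_apply_eq hmin hMcl hMne hc (hstab ▸ AddSubgroup.mem_zmultiples c))
    (hM.coe_eq_of_apply_eq hT hstab)
  obtain ⟨k, rfl⟩ := AddSubgroup.mem_zmultiples_iff.1 (hstab ▸ hsM)
  exact ⟨c⁻¹, ⟨_, isEigenvector_toCircle_comp hθ hθT⟩, inv_ne_zero hc.ne', k,
    by rw [zsmul_eq_mul]; field_simp⟩

theorem IsFlow.not_isMinimalMap_iff [Nonempty Y] (hT : IsFlow T) (hmin : IsMinimalFlow T)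
    (hs : s ≠ 0) : ¬ IsMinimalMap (T s) ↔ ∃ l ∈ Eigenvalues T, l ≠ 0 ∧ ∃ k : ℤ, l * s = k :=
  ⟨hT.exists_eigenvalue_mul_eq_int_of_not_isMinimalMap hmin hs,
    fun ⟨_, ⟨_, hχ⟩, hl, _, hk⟩ => hχ.not_isMinimalMap hT hl hk⟩

theorem IsFlow.not_isMinimalMap_one_div_iff [Nonempty Y] (hT : IsFlow T)
    (hmin : IsMinimalFlow T) {t : ℝ} (ht : t ≠ 0) :
    ¬ IsMinimalMap (T (1 / t)) ↔ ∃ k : ℤ, k ≠ 0 ∧ k • t ∈ Eigenvalues T := by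
  rw [hT.not_isMinimalMap_iff hmin (one_div_ne_zero ht)]
  constructor
  · rintro ⟨l, hl, hl0, k, hk⟩
    have hlk : l = k * t := by field_simp at hk; linarith
    refine ⟨k, fun hk0 => hl0 (by simp [hlk, hk0]), by rwa [zsmul_eq_mul, ← hlk]⟩
  · rintro ⟨k, hk, hkt⟩
    refine ⟨k • t, hkt, smul_ne_zero hk ht, k, ?_⟩
    rw [zsmul_eq_mul]
    field_simp

end Forward

open scoped TensorProduct in
/-- For a minimal continuous flow `(Y, T)` with eigenvalue group
`Λ(Y, T) = G ≤ ℝ`, the map `ℚ ⊗_ℤ Λ(Y,T) → ℝ` determined by `r ⊗ λ ↦ r * λ` is an injective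
`ℚ`-linear map whose range is `{0} ∪ {t ≠ 0 : the time-(1/t) map is not minimal}`; in particular
this set is a countable `ℚ`-linear subspace of `ℝ`. -/
theorem tensor_eigenvalues_inj_range_eq {Y : Type*} [MetricSpace Y] [CompactSpace Y]
    [Nonempty Y] (T : ℝ → Y → Y) (hT : IsFlow T) (hmin : IsMinimalFlow T)
    (G : AddSubgroup ℝ) (hG : (G : Set ℝ) = Eigenvalues T) :
    ∃ φ : ℚ ⊗[ℤ] G →ₗ[ℚ] ℝ,
      (∀ (r : ℚ) (l : G), φ (r ⊗ₜ[ℤ] l) = (r : ℝ) * (l : ℝ)) ∧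
      Function.Injective φ ∧
      Set.range φ = {0} ∪ {t : ℝ | t ≠ 0 ∧ ¬ IsMinimalMap (T (1 / t))} ∧
      ({(0 : ℝ)} ∪ {t : ℝ | t ≠ 0 ∧ ¬ IsMinimalMap (T (1 / t))}).Countable := by
  have hrange : range (G.subtype.toIntLinearMap.liftBaseChange ℚ) =
      {0} ∪ {t : ℝ | t ≠ 0 ∧ ¬ IsMinimalMap (T (1 / t))} := by
    ext t
    rw [G.mem_range_liftBaseChange_subtype]
    rcases eq_or_ne t 0 with rfl | ht
    · simpa using ⟨1, one_ne_zero⟩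
    · simp only [mem_union, mem_singleton_iff, ht, false_or, mem_ofPred_eq, ne_eq,
        not_false_eq_true, true_and, hT.not_isMinimalMap_one_div_iff hmin ht, ← hG,
        SetLike.mem_coe]
  refine ⟨_, fun r l => ?_, G.injective_liftBaseChange_subtype, hrange, hrange ▸
    G.countable_range_liftBaseChange_subtype (hG ▸ eigenvalues_countable T)⟩
  simp [Rat.smul_def]
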